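/- arXiv:2605.25905 — 5 statements merged into one kernel-verified Lean document; each statement's English description precedes it below -/
import Mathlib

section
/- Let t ≥ 2 and let G be a K_{2,t+1}-free graph on n vertices. Then the number of copies of K_{t,t} in G (i.e., unordered pairs {V, W} of disjoint t-element vertex sets with all edges between V and W present) is at most n(n-1)/2. -/
/-!
In a `K_{2,t+1}`-free graph two distinct vertices have at most `t` common neighbours. Hence in a
copy `{P, W}` of `K_{t,t}` any pair of vertices of `P` determines `W` as its common
neighbourhood, and then any pair of vertices of `W` determines `P`. Charging each copy to the
pairs inside one of its sides, every one of the `n(n-1)/2` pairs is charged at most once.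
-/

open Finset

namespace SimpleGraph

variable {V : Type*} [DecidableEq V] {G : SimpleGraph V} {t : ℕ} {p P P' W W' : Finset V}

lemma mem_of_isCompleteBetween_pair
    (hfree : ¬ ∃ A B : Finset V, Disjoint A B ∧ #A = 2 ∧ #B = t + 1 ∧
      G.IsCompleteBetween A B)
    (hp : #p = 2) (hW : #W = t) (hpW : G.IsCompleteBetween p W) {w : V}
    (hw : ∀ a ∈ p, G.Adj a w) : w ∈ W := by
  by_contra hwW
  have hcomplete : G.IsCompleteBetween p (insert w W : Finset V) := by
    intro a ha b hb
    rcases mem_insert.1 hb with rfl | hb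
    · exact hw a ha
    · exact hpW ha hb
  exact hfree ⟨p, insert w W, disjoint_coe.1 hcomplete.disjoint, hp,
    by rw [card_insert_of_notMem hwW, hW], hcomplete⟩

lemma eq_of_isCompleteBetween_of_pair_subset
    (hfree : ¬ ∃ A B : Finset V, Disjoint A B ∧ #A = 2 ∧ #B = t + 1 ∧
      G.IsCompleteBetween A B)
    (hp : #p = 2) (hW : #W = t) (hW' : #W' = t)
    (hPW : G.IsCompleteBetween P W) (hPW' : G.IsCompleteBetween P' W')
    (hpP : p ⊆ P) (hpP' : p ⊆ P') : W = W' := by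
  refine eq_of_subset_of_card_le (fun w hw => ?_) (by omega)
  exact mem_of_isCompleteBetween_pair hfree hp hW' (fun _ ha _ hb => hPW' (hpP' ha) hb)
    fun a ha => hPW (hpP ha) hw

lemma sym2_eq_of_pair_subset
    (hfree : ¬ ∃ A B : Finset V, Disjoint A B ∧ #A = 2 ∧ #B = t + 1 ∧
      G.IsCompleteBetween A B)
    (ht : 2 ≤ t) (hp : #p = 2) (hP : #P = t) (hW : #W = t) (hP' : #P' = t) (hW' : #W' = t)
    (hPW : G.IsCompleteBetween P W) (hPW' : G.IsCompleteBetween P' W')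
    (hpP : p ⊆ P) (hpP' : p ⊆ P') : s(P, W) = s(P', W') := by
  have hWW' : W = W' := eq_of_isCompleteBetween_of_pair_subset hfree hp hW hW' hPW hPW' hpP hpP'
  subst hWW'
  obtain ⟨q, hqW, hq⟩ := exists_subset_card_eq (hW ▸ ht : 2 ≤ #W)
  rw [eq_of_isCompleteBetween_of_pair_subset hfree hq hP hP' hPW.symm hPW'.symm hqW hqW]

end SimpleGraph

open scoped Classical in
/-- A `K_{2,t+1}`-free graph on `n` vertices has at most `n(n-1)/2` copies of
`K_{t,t}` (unordered pairs of disjoint `t`-sets with all cross edges present). -/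
theorem stmt_1 {V : Type*} [Fintype V] [DecidableEq V] (t : ℕ) (ht : 2 ≤ t)
    (G : SimpleGraph V)
    (hfree : ¬ ∃ A B : Finset V, Disjoint A B ∧ A.card = 2 ∧ B.card = t + 1 ∧
      ∀ a ∈ A, ∀ b ∈ B, G.Adj a b) :
    (Finset.univ.filter (fun x : Sym2 (Finset V) =>
      ∃ P W : Finset V, x = s(P, W) ∧ Disjoint P W ∧ P.card = t ∧ W.card = t ∧
        ∀ a ∈ P, ∀ b ∈ W, G.Adj a b)).card
      ≤ Fintype.card V * (Fintype.card V - 1) / 2 := by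
  let charged (x : Sym2 (Finset V)) (p : Finset V) : Prop :=
    ∃ P W : Finset V, x = s(P, W) ∧ #P = t ∧ #W = t ∧ G.IsCompleteBetween P W ∧ p ⊆ P
  calc _ ≤ #(univ.powersetCard 2 : Finset (Finset V)) := by
        refine card_le_card_of_forall_subsingleton charged ?_ ?_
        · simp only [mem_filter, mem_univ, true_and, mem_powersetCard, subset_univ]
          rintro x ⟨P, W, rfl, -, hP, hW, hPW⟩
          obtain ⟨p, hpP, hp⟩ := exists_subset_card_eq (hP ▸ ht : 2 ≤ #P)
          exact ⟨p, hp, P, W, rfl, hP, hW, fun _ ha _ hb => hPW _ ha _ hb, hpP⟩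
        · intro p hp
          rintro _ ⟨-, P, W, rfl, hP, hW, hPW, hpP⟩ _ ⟨-, P', W', rfl, hP', hW', hPW', hpP'⟩
          exact SimpleGraph.sym2_eq_of_pair_subset hfree ht (mem_powersetCard.1 hp).2
            hP hW hP' hW' hPW hPW' hpP hpP'
    _ = Fintype.card V * (Fintype.card V - 1) / 2 := by
        rw [card_powersetCard, card_univ, Nat.choose_two_right]
end

section
/- Let q be a prime power and t ≤ q, and let g be a uniformly random univariate polynomial over F_q of degree at most t. Let Z be the number of roots of g in F_q. Then Pr(Z = t and g ≢ 0) = (1 - 1/q)·binom(q,t)·q^{-t}. In particular, as q → ∞ with t fixed, this probability tends to 1/t!. -/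
open Polynomial

section Aux
set_option linter.unusedSectionVars false
variable {F : Type*} [Field F] [Fintype F] [DecidableEq F]

private lemma coeffP {t : ℕ} (c : Fin (t+1) → F) (j : Fin (t+1)) :
    (∑ i : Fin (t+1), C (c i) * X ^ (i:ℕ)).coeff (j:ℕ) = c j := by
  rw [Polynomial.finset_sum_coeff]
  simp only [coeff_C_mul, coeff_X_pow]
  rw [Finset.sum_eq_single j]
  · simp
  · intro b _ hb
    have : ¬ ((j:ℕ) = (b:ℕ)) := fun h => hb (Fin.ext h.symm)
    simp [this]
  · simp

private lemma degP {t : ℕ} (c : Fin (t+1) → F) :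
    (∑ i : Fin (t+1), C (c i) * X ^ (i:ℕ)).natDegree ≤ t := by
  apply Polynomial.natDegree_sum_le_of_forall_le
  intro i _
  refine le_trans (natDegree_C_mul_le _ _) ?_
  simpa [natDegree_X_pow] using Nat.lt_succ_iff.mp i.isLt

private lemma P_coeff_eq {t : ℕ} (g : F[X]) (hg : g.natDegree ≤ t) :
    (∑ i : Fin (t+1), C (g.coeff i) * X ^ (i:ℕ)) = g := by
  ext j
  rcases le_or_gt j t with hj | hj
  · simpa using coeffP (fun i : Fin (t+1) => g.coeff i) ⟨j, Nat.lt_succ_of_le hj⟩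
  · rw [coeff_eq_zero_of_natDegree_lt (lt_of_le_of_lt (degP _) hj),
        coeff_eq_zero_of_natDegree_lt (lt_of_le_of_lt hg hj)]

/-- properties of `C a * ∏ s ∈ S, (X - C s)` -/
private lemma g_props {a : F} (ha : a ≠ 0) (S : Finset F) :
    (C a * ∏ s ∈ S, (X - C s)) ≠ 0 ∧
    (C a * ∏ s ∈ S, (X - C s)).natDegree = S.card ∧
    (C a * ∏ s ∈ S, (X - C s)).leadingCoeff = a ∧
    ∀ x : F, eval x (C a * ∏ s ∈ S, (X - C s)) = 0 ↔ x ∈ S := by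
  have hm : (∏ s ∈ S, (X - C s)).Monic :=
    monic_prod_of_monic _ _ (fun s _ => monic_X_sub_C s)
  have hne : (C a * ∏ s ∈ S, (X - C s)) ≠ 0 :=
    mul_ne_zero (by simpa using ha) hm.ne_zero
  refine ⟨hne, ?_, ?_, ?_⟩
  · rw [natDegree_C_mul ha, natDegree_prod _ _ (fun s _ => (monic_X_sub_C s).ne_zero)]
    simp [natDegree_X_sub_C]
  · rw [leadingCoeff_mul, leadingCoeff_C, hm.leadingCoeff, mul_one]
  · intro x
    simp [eval_prod, Finset.prod_eq_zero_iff, ha, sub_eq_zero, eq_comm]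

private lemma count_lemma (t : ℕ) (htq : t ≤ Fintype.card F) :
    {c : Fin (t + 1) → F |
        (∑ i : Fin (t + 1), Polynomial.C (c i) * Polynomial.X ^ (i : ℕ)) ≠ 0 ∧
        (Finset.univ.filter (fun s : F =>
          Polynomial.eval s
            (∑ i : Fin (t + 1), Polynomial.C (c i) * Polynomial.X ^ (i : ℕ)) = 0)).card
          = t}.ncard
    = (Fintype.card F - 1) * (Fintype.card F).choose t := by
  classical
  set Sset := {c : Fin (t + 1) → F |
        (∑ i : Fin (t + 1), Polynomial.C (c i) * Polynomial.X ^ (i : ℕ)) ≠ 0 ∧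
        (Finset.univ.filter (fun s : F =>
          Polynomial.eval s
            (∑ i : Fin (t + 1), Polynomial.C (c i) * Polynomial.X ^ (i : ℕ)) = 0)).card
          = t} with hSset
  let ψ : {a : F // a ≠ 0} × {S : Finset F // S.card = t} → Fin (t+1) → F :=
    fun p i => (C (p.1 : F) * ∏ s ∈ (p.2 : Finset F), (X - C s)).coeff i
  -- reconstitution: the polynomial built from ψ p equals the product polynomial
  have hrecon : ∀ p : {a : F // a ≠ 0} × {S : Finset F // S.card = t},
      (∑ i : Fin (t + 1), C (ψ p i) * X ^ (i : ℕ))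
        = C (p.1 : F) * ∏ s ∈ (p.2 : Finset F), (X - C s) := by
    intro p
    exact P_coeff_eq _ (by
      rw [(g_props p.1.2 p.2.1).2.1, p.2.2])
  have hmem : ∀ p, ψ p ∈ Sset := by
    intro p
    obtain ⟨hne, hdeg, hlc, hroot⟩ := g_props p.1.2 (p.2 : Finset F)
    constructor
    · rw [hrecon p]; exact hne
    · have : (Finset.univ.filter (fun s : F =>
          eval s (∑ i : Fin (t + 1), C (ψ p i) * X ^ (i : ℕ)) = 0)) = (p.2 : Finset F) := by
        ext x
        simp only [Finset.mem_filter, Finset.mem_univ, true_and, hrecon p]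
        exact hroot x
      rw [this, p.2.2]
  have hinj : Function.Injective ψ := by
    rintro p q h
    have hpq : C (p.1 : F) * ∏ s ∈ (p.2 : Finset F), (X - C s)
        = C (q.1 : F) * ∏ s ∈ (q.2 : Finset F), (X - C s) := by
      rw [← hrecon p, ← hrecon q]
      simp only [funext_iff] at h
      exact Finset.sum_congr rfl (fun i _ => by rw [h i])
    obtain ⟨_, _, hlcp, hrootp⟩ := g_props p.1.2 (p.2 : Finset F)
    obtain ⟨_, _, hlcq, hrootq⟩ := g_props q.1.2 (q.2 : Finset F)
    have hS : (p.2 : Finset F) = (q.2 : Finset F) := by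
      ext x
      rw [← hrootp x, ← hrootq x, hpq]
    have ha : (p.1 : F) = (q.1 : F) := by
      rw [← hlcp, ← hlcq, hpq]
    exact Prod.ext (Subtype.ext ha) (Subtype.ext hS)
  have hsurj : ∀ c ∈ Sset, ∃ p, ψ p = c := by
    intro c hc
    obtain ⟨hne, hcard⟩ := hc
    set g := ∑ i : Fin (t + 1), C (c i) * X ^ (i : ℕ) with hg
    have hdegle : g.natDegree ≤ t := degP c
    have hfilter : Finset.univ.filter (fun s : F => eval s g = 0) = g.roots.toFinset := by
      ext x
      simp [Multiset.mem_toFinset, mem_roots, hne, IsRoot]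
    have hcard' : g.roots.toFinset.card = t := by rw [← hfilter]; exact hcard
    have hle1 : Multiset.card g.roots ≤ t := le_trans (card_roots' g) hdegle
    have hle2 : t ≤ Multiset.card g.roots := by
      rw [← hcard']; exact Multiset.toFinset_card_le _
    have hcardroots : Multiset.card g.roots = t := le_antisymm hle1 hle2
    have hnodup : g.roots.Nodup :=
      Multiset.toFinset_card_eq_card_iff_nodup.mp (by rw [hcard', hcardroots])
    have hdeg : g.natDegree = t := le_antisymm hdegle (hcardroots ▸ card_roots' g)
    have hlcne : g.leadingCoeff ≠ 0 := leadingCoeff_ne_zero.mpr hne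
    refine ⟨⟨⟨g.leadingCoeff, hlcne⟩, ⟨g.roots.toFinset, hcard'⟩⟩, ?_⟩
    have hprod : (∏ s ∈ g.roots.toFinset, (X - C s))
        = (g.roots.map fun a => X - C a).prod := by
      rw [Finset.prod_eq_multiset_prod]
      congr 1
      rw [Multiset.toFinset_val, hnodup.dedup]
    have hgeq : C g.leadingCoeff * ∏ s ∈ g.roots.toFinset, (X - C s) = g := by
      rw [hprod]
      exact C_leadingCoeff_mul_prod_multiset_X_sub_C (by rw [hcardroots, hdeg])
    funext i
    show (C g.leadingCoeff * ∏ s ∈ g.roots.toFinset, (X - C s)).coeff i = c i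
    rw [hgeq, hg]
    exact coeffP c i
  have hrange : Sset = Set.range ψ := by
    ext c
    constructor
    · intro hc
      obtain ⟨p, hp⟩ := hsurj c hc
      exact ⟨p, hp⟩
    · rintro ⟨p, rfl⟩
      exact hmem p
  rw [hrange, ← Nat.card_coe_set_eq, Nat.card_range_of_injective hinj,
    Nat.card_eq_fintype_card, Fintype.card_prod, Fintype.card_finset_len]
  congr 1
  rw [Fintype.card_subtype_compl, Fintype.card_subtype_eq]
end Aux

/-- For a uniformly random univariate polynomial `g` over `F_q` of degree at
most `t` (with `t ≤ q`), letting `Z` denote the number of roots of `g` in `F_q`,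
`Pr(Z = t and g ≢ 0) = (1 - 1/q)·C(q,t)·q^{-t}`. -/
theorem stmt_12 {F : Type*} [Field F] [Fintype F] [DecidableEq F] (t : ℕ)
    (htq : t ≤ Fintype.card F) :
    ({c : Fin (t + 1) → F |
        (∑ i : Fin (t + 1), Polynomial.C (c i) * Polynomial.X ^ (i : ℕ)) ≠ 0 ∧
        (Finset.univ.filter (fun s : F =>
          Polynomial.eval s
            (∑ i : Fin (t + 1), Polynomial.C (c i) * Polynomial.X ^ (i : ℕ)) = 0)).card
          = t}.ncard : ℚ)
        / (Fintype.card F : ℚ) ^ (t + 1)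
      = (1 - 1 / (Fintype.card F : ℚ)) * ((Fintype.card F).choose t : ℚ)
          / (Fintype.card F : ℚ) ^ t := by
  rw [count_lemma t htq]
  have hq : 1 ≤ Fintype.card F := Fintype.card_pos
  have hq0 : (Fintype.card F : ℚ) ≠ 0 := Nat.cast_ne_zero.mpr (by omega)
  push_cast [Nat.cast_sub hq]
  field_simp
  ring_nf
end

section
/- Let q be a prime power, t ≥ 2 with t | q - 1, and let H ≤ F_q^× be the subgroup of order t. If α, β ∈ F_q with β ≠ 0 and α + β·h ∈ H for all h ∈ H, then α = 0 (and consequently β ∈ H, since β·h ∈ H for all h ∈ H forces β ∈ H). -/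
/-!
An affine map `x ↦ α + β x` with `β ≠ 0` is injective, so if it sends the finite group `H` of
`t`-th roots of unity into itself it permutes `H`. Summing over `H` gives
`t α + β ∑ H = ∑ H`. Multiplication by a primitive root `ζ ≠ 1` also permutes `H`, so `∑ H = 0`;
and `t ≠ 0` in a domain containing a primitive `t`-th root of unity, hence `α = 0`.
-/

open Finset Polynomial

theorem Finset.card_nsmul_add_mul_sum_eq_sum {R : Type*} [Ring R] [IsDomain R] {s : Finset R}
    {a b : R} (hb : b ≠ 0) (hs : Set.MapsTo (fun x => a + b * x) s s) :
    #s • a + b * ∑ x ∈ s, x = ∑ x ∈ s, x := by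
  have hinj : Set.InjOn (fun x => a + b * x) s := fun x _ y _ hxy =>
    mul_left_cancel₀ hb (add_left_cancel hxy)
  have hperm : ∑ x ∈ s, (a + b * x) = ∑ x ∈ s, x :=
    sum_nbij _ hs hinj (surjOn_of_injOn_of_card_le _ hs hinj le_rfl) fun _ _ => rfl
  rwa [sum_add_distrib, sum_const, ← mul_sum] at hperm

theorem Polynomial.mapsTo_nthRootsFinset {R : Type*} [CommRing R] [IsDomain R] {n : ℕ}
    (hn : 0 < n) {a : R} {f : R → R} (hf : ∀ x, x ^ n = a → f x ^ n = a) :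
    Set.MapsTo f (nthRootsFinset n a) (nthRootsFinset n a) := fun x hx => by
  rw [mem_coe, mem_nthRootsFinset hn] at hx ⊢
  exact hf x hx

namespace IsPrimitiveRoot

variable {R : Type*} [CommRing R] [IsDomain R] {ζ : R} {t : ℕ}

theorem sum_nthRootsFinset_eq_zero (hζ : IsPrimitiveRoot ζ t) (ht : 1 < t) :
    ∑ x ∈ nthRootsFinset t (1 : R), x = 0 := by
  have ht0 : 0 < t := by omega
  have hfix := card_nsmul_add_mul_sum_eq_sum (s := nthRootsFinset t (1 : R)) (a := 0)
    (hζ.ne_zero ht0.ne') <| mapsTo_nthRootsFinset ht0 fun x (hx : x ^ t = 1) => by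
      rw [zero_add, mul_pow, hζ.pow_eq_one, hx, one_mul]
  rw [smul_zero, zero_add] at hfix
  have : (ζ - 1) * ∑ x ∈ nthRootsFinset t (1 : R), x = 0 := by
    rw [sub_mul, hfix, one_mul, sub_self]
  exact (mul_eq_zero.mp this).resolve_left (sub_ne_zero.mpr (hζ.ne_one ht))

theorem eq_zero_of_forall_pow_add_mul_eq_one (hζ : IsPrimitiveRoot ζ t) (ht : 1 < t) {a b : R}
    (hb : b ≠ 0) (h : ∀ x : R, x ^ t = 1 → (a + b * x) ^ t = 1) : a = 0 := by
  have hta := card_nsmul_add_mul_sum_eq_sum hb (mapsTo_nthRootsFinset (by omega) h)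
  rw [hζ.sum_nthRootsFinset_eq_zero ht, mul_zero, add_zero, hζ.card_nthRootsFinset,
    nsmul_eq_mul] at hta
  have : NeZero t := ⟨by omega⟩
  exact (mul_eq_zero.mp hta).resolve_left hζ.neZero'.out

end IsPrimitiveRoot

theorem FiniteField.exists_isPrimitiveRoot_of_dvd_card_sub_one {F : Type*} [Field F] [Fintype F]
    {t : ℕ} (hdvd : t ∣ Fintype.card F - 1) : ∃ ζ : F, IsPrimitiveRoot ζ t := by
  classical
  obtain ⟨g, hg⟩ := IsCyclic.exists_ofOrder_eq_natCard (α := Fˣ)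
  rw [Nat.card_eq_fintype_card, Fintype.card_units] at hg
  have hgen : IsPrimitiveRoot (g : F) (Fintype.card F - 1) :=
    IsPrimitiveRoot.coe_units_iff.mpr (hg ▸ IsPrimitiveRoot.orderOf g)
  obtain ⟨k, hk⟩ := hdvd
  exact ⟨g ^ k, hgen.pow (by have := Fintype.one_lt_card (α := F); omega) (by rw [hk, mul_comm])⟩

/-- Let `H = {x : x^t = 1}` be the multiplicative subgroup of `F_q^×` of order
`t` (where `t ≥ 2` and `t ∣ q - 1`). If `β ≠ 0` and `α + β·h ∈ H` for every `h ∈ H`, then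
`α = 0` (and consequently `β ∈ H`). -/
theorem stmt_16 {F : Type*} [Field F] [Fintype F] (t : ℕ) (ht : 2 ≤ t)
    (hdvd : t ∣ Fintype.card F - 1) (α β : F) (hβ : β ≠ 0)
    (h : ∀ x : F, x ^ t = 1 → (α + β * x) ^ t = 1) :
    α = 0 ∧ β ^ t = 1 := by
  obtain ⟨ζ, hζ⟩ := FiniteField.exists_isPrimitiveRoot_of_dvd_card_sub_one hdvd
  have hα : α = 0 := hζ.eq_zero_of_forall_pow_add_mul_eq_one ht hβ h
  refine ⟨hα, ?_⟩
  simpa [hα] using h 1 (one_pow t)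
end

section
/- Let q be a prime power, t ≥ 2 with t | q-1, and H ≤ F_q^× the subgroup of order t. Let u = [a,b] and v = [a',b'] be vertices of Füredi's graph G_t(q) with (a,b), (a',b') linearly independent over F_q. Then u and v have exactly t common neighbors, namely the vertices w_h = [x_h, y_h] for h ∈ H, where (x_h, y_h) is the unique solution of a·x_h + b·y_h = 1 and a'·x_h + b'·y_h = h. -/
/-!
Rescaling representatives by elements of `H` multiplies `ax + by` by an element of `H`, so
adjacency can be tested on any representatives. A common neighbour of `[a,b]` and `[a',b']`
therefore has a representative `(x,y)` with `ax + by = 1`, unique in its class, and then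
`h = a'x + b'y ∈ H`; conversely, since `ab' - a'b ≠ 0`, Cramer's rule produces such a point for
every `h ∈ H`. So the common neighbours correspond bijectively to `H`, which has `t` elements
because `F^×` is cyclic of order `q - 1`.
-/

/-- The `H`-orbit relation on nonzero points of `F × F`, where `H = {h : h^t = 1}` is the
multiplicative subgroup of `t`-th roots of unity. -/
def FurediRel {F : Type*} [Field F] (t : ℕ) :
    {p : F × F // p ≠ 0} → {p : F × F // p ≠ 0} → Prop :=
  fun v w => ∃ h : F, h ^ t = 1 ∧
    (w : F × F) = (h * (v : F × F).1, h * (v : F × F).2)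

/-- The vertex set of Füredi's graph `G_t(q)`: `H`-orbits of nonzero points of `F × F`. -/
def FurediVertex (F : Type*) [Field F] (t : ℕ) := Quot (FurediRel (F := F) t)

/-- Adjacency in Füredi's graph: `[a,b] ~ [x,y]` iff `ax + by ∈ H`, i.e. `(ax+by)^t = 1`. -/
def FurediAdj {F : Type*} [Field F] {t : ℕ} (u w : FurediVertex F t) : Prop :=
  ∃ p q : {p : F × F // p ≠ 0}, Quot.mk (FurediRel t) p = u ∧ Quot.mk (FurediRel t) q = w ∧
    ((p : F × F).1 * (q : F × F).1 + (p : F × F).2 * (q : F × F).2) ^ t = 1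

section Cramer

variable {F : Type*} [Field F] {a b a' b' : F}

lemma det_ne_zero_of_linearIndependent_pair
    (hind : LinearIndependent F ![((a, b) : F × F), ((a', b') : F × F)]) :
    a * b' - a' * b ≠ 0 := by
  intro hD
  have h₁ := LinearIndependent.pair_iff.mp hind b' (-b) (by
    simp only [Prod.smul_mk, smul_eq_mul, Prod.mk_add_mk, Prod.mk_eq_zero]
    exact ⟨by linear_combination hD, by ring⟩)
  have h₂ := LinearIndependent.pair_iff.mp hind a' (-a) (by
    simp only [Prod.smul_mk, smul_eq_mul, Prod.mk_add_mk, Prod.mk_eq_zero]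
    exact ⟨by ring, by linear_combination -hD⟩)
  apply hind.ne_zero 0
  simp_all

/-- Solves `a x + b y = c`, `a' x + b' y = d` when `a * b' - a' * b ≠ 0` (otherwise `0`). -/
def cramerSol (a b a' b' c d : F) : F × F :=
  ((c * b' - b * d) / (a * b' - a' * b), (a * d - c * a') / (a * b' - a' * b))

lemma linear_system_iff_eq_cramerSol (hD : a * b' - a' * b ≠ 0) {c d : F} {q : F × F} :
    a * q.1 + b * q.2 = c ∧ a' * q.1 + b' * q.2 = d ↔ q = cramerSol a b a' b' c d := by
  constructor
  · rintro ⟨e₁, e₂⟩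
    ext
    · rw [cramerSol, eq_div_iff hD]; linear_combination b' * e₁ - b * e₂
    · rw [cramerSol, eq_div_iff hD]; linear_combination a * e₂ - a' * e₁
  · rintro rfl
    constructor <;>
    · rw [cramerSol, mul_div_assoc', mul_div_assoc', ← add_div, div_eq_iff hD]
      ring

lemma existsUnique_linear_system (hD : a * b' - a' * b ≠ 0) (c d : F) :
    ∃! q : F × F, a * q.1 + b * q.2 = c ∧ a' * q.1 + b' * q.2 = d :=
  ⟨_, (linear_system_iff_eq_cramerSol hD).2 rfl, fun _ hq =>
    (linear_system_iff_eq_cramerSol hD).1 hq⟩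

lemma ne_zero_of_mul_add_mul_eq_one {x y : F} (h : a * x + b * y = 1) :
    ((x, y) : F × F) ≠ 0 := by
  rintro hxy
  simp_all [Prod.mk_eq_zero]

end Cramer

section Furedi

variable {F : Type*} [Field F] {t : ℕ}

lemma furediRel_equivalence (ht : 0 < t) : Equivalence (FurediRel (F := F) t) where
  refl _ := ⟨1, one_pow t, by simp⟩
  symm := by
    rintro v w ⟨h, hh, hw⟩
    have h0 : h ≠ 0 := by rintro rfl; simp [zero_pow ht.ne'] at hh
    exact ⟨h⁻¹, by rw [inv_pow, hh, inv_one], by simp [hw, h0]⟩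
  trans := by
    rintro u v w ⟨h, hh, hv⟩ ⟨g, hg, hw⟩
    exact ⟨g * h, by rw [mul_pow, hh, hg, one_mul], by simp [hw, hv, mul_assoc]⟩

lemma furediRel_of_mk_eq (ht : 0 < t) {p q : {p : F × F // p ≠ 0}}
    (h : Quot.mk (FurediRel t) p = Quot.mk (FurediRel t) q) : FurediRel t p q :=
  (furediRel_equivalence ht).eqvGen_iff.mp (Quot.eqvGen_exact h)

lemma mk_eq_mk_smul {h : F} (hh : h ^ t = 1) (p : {p : F × F // p ≠ 0})
    (hp : h • (p : F × F) ≠ 0) :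
    Quot.mk (FurediRel t) p = Quot.mk (FurediRel t) ⟨h • (p : F × F), hp⟩ :=
  Quot.sound ⟨h, hh, rfl⟩

lemma dot_pow_eq_one_of_furediRel {p p' q q' : {p : F × F // p ≠ 0}}
    (hp : FurediRel t p p') (hq : FurediRel t q q')
    (h : ((p : F × F).1 * (q : F × F).1 + (p : F × F).2 * (q : F × F).2) ^ t = 1) :
    ((p' : F × F).1 * (q' : F × F).1 + (p' : F × F).2 * (q' : F × F).2) ^ t = 1 := by
  obtain ⟨g, hg, hp'⟩ := hp
  obtain ⟨k, hk, hq'⟩ := hq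
  rw [hp', hq']
  calc _ = ((g * k) * ((p : F × F).1 * (q : F × F).1 + (p : F × F).2 * (q : F × F).2)) ^ t := by
        ring
    _ = 1 := by rw [mul_pow, mul_pow, hg, hk, h, one_mul, one_mul]

lemma furediAdj_mk_mk_iff (ht : 0 < t) (p q : {p : F × F // p ≠ 0}) :
    FurediAdj (Quot.mk (FurediRel t) p) (Quot.mk (FurediRel t) q) ↔
      ((p : F × F).1 * (q : F × F).1 + (p : F × F).2 * (q : F × F).2) ^ t = 1 := by
  refine ⟨?_, fun h => ⟨p, q, rfl, rfl, h⟩⟩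
  rintro ⟨p₀, q₀, hp, hq, h⟩
  exact dot_pow_eq_one_of_furediRel (furediRel_of_mk_eq ht hp) (furediRel_of_mk_eq ht hq) h

lemma furediAdj_mk_and_furediAdj_mk_iff (ht : 0 < t) {a b a' b' : F}
    (hab : ((a, b) : F × F) ≠ 0) (hab' : ((a', b') : F × F) ≠ 0) (w : FurediVertex F t) :
    FurediAdj (Quot.mk (FurediRel t) ⟨(a, b), hab⟩) w ∧
        FurediAdj (Quot.mk (FurediRel t) ⟨(a', b'), hab'⟩) w ↔
      ∃ (h x y : F) (hxy : ((x, y) : F × F) ≠ 0), h ^ t = 1 ∧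
        a * x + b * y = 1 ∧ a' * x + b' * y = h ∧
        w = Quot.mk (FurediRel t) ⟨(x, y), hxy⟩ := by
  constructor
  · induction w using Quot.ind with | mk q => ?_
    rintro ⟨hs, hr⟩
    rw [furediAdj_mk_mk_iff ht] at hs hr
    obtain ⟨⟨x, y⟩, hq⟩ := q
    set s := a * x + b * y
    have hs0 : s ≠ 0 := by rintro h0; simp [h0, zero_pow ht.ne'] at hs
    have hnorm : a * (s⁻¹ * x) + b * (s⁻¹ * y) = 1 := by
      rw [← inv_mul_cancel₀ hs0]; ring
    refine ⟨(a' * x + b' * y) / s, s⁻¹ * x, s⁻¹ * y, ne_zero_of_mul_add_mul_eq_one hnorm,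
      by rw [div_pow, hr, hs, div_one], hnorm, by field_simp, ?_⟩
    exact mk_eq_mk_smul (by rw [inv_pow, hs, inv_one]) _ _
  · rintro ⟨h, x, y, hxy, hh, e₁, e₂, rfl⟩
    rw [furediAdj_mk_mk_iff ht, furediAdj_mk_mk_iff ht]
    exact ⟨(congrArg (· ^ t) e₁).trans (one_pow t), (congrArg (· ^ t) e₂).trans hh⟩

lemma eq_of_mk_eq_of_mul_add_mul_eq_one (ht : 0 < t) {a b : F} {p q : {p : F × F // p ≠ 0}}
    (hpq : Quot.mk (FurediRel t) p = Quot.mk (FurediRel t) q)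
    (hp : a * (p : F × F).1 + b * (p : F × F).2 = 1)
    (hq : a * (q : F × F).1 + b * (q : F × F).2 = 1) : p = q := by
  obtain ⟨c, -, hc⟩ := furediRel_of_mk_eq ht hpq
  rw [hc] at hq
  have hc1 : c = 1 := by linear_combination hq - c * hp
  ext1
  rw [hc, hc1, one_mul, one_mul]

end Furedi

lemma ncard_setOf_pow_eq_one {F : Type*} [Field F] [Fintype F] {t : ℕ}
    (hdvd : t ∣ Fintype.card F - 1) : {h : F | h ^ t = 1}.ncard = t := by
  have hq : 0 < Fintype.card F - 1 := Nat.sub_pos_of_lt Fintype.one_lt_card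
  obtain ⟨g, hg⟩ := IsCyclic.exists_ofOrder_eq_natCard (α := Fˣ)
  rw [Nat.card_units, Nat.card_eq_fintype_card] at hg
  obtain ⟨ζ, hζ⟩ : ∃ ζ : Fˣ, orderOf ζ = t := ⟨g ^ ((Fintype.card F - 1) / t), by
    rw [orderOf_pow, hg, Nat.gcd_eq_right (Nat.div_dvd_of_dvd hdvd),
      Nat.div_div_self hdvd hq.ne']⟩
  have hprim : IsPrimitiveRoot (ζ : F) t :=
    IsPrimitiveRoot.coe_units_iff.mpr (hζ ▸ IsPrimitiveRoot.orderOf ζ)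
  have hroots : {h : F | h ^ t = 1} = Polynomial.nthRootsFinset t (1 : F) := by
    ext x
    simp [Polynomial.mem_nthRootsFinset (Nat.pos_of_dvd_of_pos hdvd hq)]
  rw [hroots, Set.ncard_coe_finset, hprim.card_nthRootsFinset]

theorem stmt_18_general {F : Type*} [Field F] [Fintype F] (t : ℕ)
    (hdvd : t ∣ Fintype.card F - 1) (a b a' b' : F)
    (hab : ((a, b) : F × F) ≠ 0) (hab' : ((a', b') : F × F) ≠ 0)
    (hind : LinearIndependent F ![((a, b) : F × F), ((a', b') : F × F)]) :
    (∀ h : F, h ^ t = 1 →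
      ∃! q : F × F, a * q.1 + b * q.2 = 1 ∧ a' * q.1 + b' * q.2 = h) ∧
    {w : FurediVertex F t |
        FurediAdj (Quot.mk (FurediRel t) ⟨(a, b), hab⟩) w ∧
        FurediAdj (Quot.mk (FurediRel t) ⟨(a', b'), hab'⟩) w}.ncard = t ∧
    ∀ w : FurediVertex F t,
      (FurediAdj (Quot.mk (FurediRel t) ⟨(a, b), hab⟩) w ∧
        FurediAdj (Quot.mk (FurediRel t) ⟨(a', b'), hab'⟩) w) ↔
      ∃ (h x y : F) (hxy : ((x, y) : F × F) ≠ 0), h ^ t = 1 ∧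
        a * x + b * y = 1 ∧ a' * x + b' * y = h ∧
        w = Quot.mk (FurediRel t) ⟨(x, y), hxy⟩ := by
  have ht : 0 < t := Nat.pos_of_dvd_of_pos hdvd (Nat.sub_pos_of_lt Fintype.one_lt_card)
  have hD := det_ne_zero_of_linearIndependent_pair hind
  have hcommon := furediAdj_mk_and_furediAdj_mk_iff ht hab hab'
  have hsol (h : F) := (linear_system_iff_eq_cramerSol hD (c := 1) (d := h)).2 rfl
  let w (h : F) : FurediVertex F t :=
    Quot.mk _ ⟨cramerSol a b a' b' 1 h, ne_zero_of_mul_add_mul_eq_one (hsol h).1⟩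
  have himage : {v : FurediVertex F t |
        FurediAdj (Quot.mk (FurediRel t) ⟨(a, b), hab⟩) v ∧
        FurediAdj (Quot.mk (FurediRel t) ⟨(a', b'), hab'⟩) v} = w '' {h | h ^ t = 1} := by
    ext v
    rw [Set.mem_ofPred_eq, hcommon]
    constructor
    · rintro ⟨h, x, y, hxy, hh, e₁, e₂, rfl⟩
      have hxy_eq := (linear_system_iff_eq_cramerSol hD (q := (x, y))).1 ⟨e₁, e₂⟩
      exact ⟨h, hh, congrArg _ (Subtype.ext hxy_eq.symm)⟩
    · rintro ⟨h, hh, rfl⟩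
      exact ⟨h, _, _, _, hh, (hsol h).1, (hsol h).2, rfl⟩
  have hinj : Set.InjOn w {h | h ^ t = 1} := fun h₁ _ h₂ _ hw => by
    have hsol_eq : cramerSol a b a' b' 1 h₁ = cramerSol a b a' b' 1 h₂ := congrArg Subtype.val
      (eq_of_mk_eq_of_mul_add_mul_eq_one ht hw (hsol h₁).1 (hsol h₂).1)
    rw [← (hsol h₁).2, hsol_eq, (hsol h₂).2]
  refine ⟨fun h _ => existsUnique_linear_system hD 1 h, ?_, hcommon⟩
  rw [himage, hinj.ncard_image, ncard_setOf_pow_eq_one hdvd]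

/-- If `u = [a,b]` and `v = [a',b']` are vertices of Füredi's graph with
`(a,b), (a',b')` linearly independent, then for each `h ∈ H` the system `ax+by=1`,
`a'x+b'y=h` has a unique solution `(x_h,y_h)`; `u` and `v` have exactly `t` common
neighbors, namely the vertices `w_h = [x_h, y_h]` for `h ∈ H`. -/
theorem stmt_18 {F : Type*} [Field F] [Fintype F] (t : ℕ) (ht : 2 ≤ t)
    (hdvd : t ∣ Fintype.card F - 1) (a b a' b' : F)
    (hab : ((a, b) : F × F) ≠ 0) (hab' : ((a', b') : F × F) ≠ 0)
    (hind : LinearIndependent F ![((a, b) : F × F), ((a', b') : F × F)]) :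
    (∀ h : F, h ^ t = 1 →
      ∃! q : F × F, a * q.1 + b * q.2 = 1 ∧ a' * q.1 + b' * q.2 = h) ∧
    {w : FurediVertex F t |
        FurediAdj (Quot.mk (FurediRel t) ⟨(a, b), hab⟩) w ∧
        FurediAdj (Quot.mk (FurediRel t) ⟨(a', b'), hab'⟩) w}.ncard = t ∧
    ∀ w : FurediVertex F t,
      (FurediAdj (Quot.mk (FurediRel t) ⟨(a, b), hab⟩) w ∧
        FurediAdj (Quot.mk (FurediRel t) ⟨(a', b'), hab'⟩) w) ↔
      ∃ (h x y : F) (hxy : ((x, y) : F × F) ≠ 0), h ^ t = 1 ∧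
        a * x + b * y = 1 ∧ a' * x + b' * y = h ∧
        w = Quot.mk (FurediRel t) ⟨(x, y), hxy⟩ :=
  stmt_18_general t hdvd a b a' b' hab hab' hind
end

section
/- Let q be a prime power, t ≥ 2 with t | q - 1, and let H ≤ F_q^× be the multiplicative subgroup of order t. Then Füredi's graph G_t(q) contains no copy of K_{3,t}: there do not exist three distinct vertices u, v, z and t distinct vertices w_1, ..., w_t such that every u, v, z is adjacent to every w_i. -/
/-!
Normalise representatives so that `u = [a,b]` and every common neighbour `w_i = [x_i,y_i]` of
`u` and `v = [a',b']` satisfies `a x_i + b y_i = 1`. The values `h_i = a' x_i + b' y_i` lie in `H`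
and are distinct, since `(a,b)` and `(a',b')` are linearly independent (otherwise `u = v`); so they
exhaust `H`. Writing `z = α (a,b) + β (a',b')`, adjacency of `z` to every `w_i` says that
`α + β H ⊆ H`. If `β = 0` then `z = u`. Otherwise `α + β H = H`, and summing over `H`, whose
elements add up to `0` as `t ≥ 2`, gives `t α = 0`; as `t ∣ q - 1` is prime to the
characteristic, `α = 0` and `z = v`.
-/

open Finset Polynomial Function

section RootsOfUnity

variable {R : Type*} [CommRing R] [IsDomain R]

theorem card_nsmul_add_mul_sum_eq_sum_of_mapsTo {s : Finset R} {α β : R} (hβ : β ≠ 0)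
    (hs : Set.MapsTo (fun x => α + β * x) s s) :
    #s • α + β * ∑ x ∈ s, x = ∑ x ∈ s, x := by
  classical
  have hinj : Set.InjOn (fun x => α + β * x) s := fun x _ y _ hxy =>
    mul_left_cancel₀ hβ (add_left_cancel hxy)
  have himage : s.image (fun x => α + β * x) = s :=
    eq_of_subset_of_card_le (image_subset_iff.2 fun x hx => hs hx) (card_image_of_injOn hinj).ge
  calc #s • α + β * ∑ x ∈ s, x = ∑ x ∈ s, (α + β * x) := by
        rw [sum_add_distrib, sum_const, mul_sum]
    _ = ∑ x ∈ s.image (fun x => α + β * x), x := (sum_image (f := fun x => x) hinj).symm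
    _ = ∑ x ∈ s, x := by rw [himage]

theorem sum_nthRootsFinset_one_eq_zero {n : ℕ} (h : 1 < #(nthRootsFinset n (1 : R))) :
    ∑ x ∈ nthRootsFinset n (1 : R), x = 0 := by
  obtain ⟨g, hg, hg1⟩ := exists_mem_ne h 1
  have hgS := card_nsmul_add_mul_sum_eq_sum_of_mapsTo (s := nthRootsFinset n (1 : R)) (α := 0)
    (ne_zero_of_mem_nthRootsFinset one_ne_zero hg)
    (fun x hx => by simpa using mul_mem_nthRootsFinset hg (mem_coe.1 hx))
  rw [smul_zero, zero_add] at hgS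
  have : (g - 1) * ∑ x ∈ nthRootsFinset n (1 : R), x = 0 := by
    rw [sub_mul, hgS, one_mul, sub_self]
  exact (mul_eq_zero.1 this).resolve_left (sub_ne_zero.2 hg1)

theorem add_mul_mapsTo_nthRootsFinset_one {n : ℕ} {α β : R}
    (hS : 1 < #(nthRootsFinset n (1 : R))) (hSR : (#(nthRootsFinset n (1 : R)) : R) ≠ 0)
    (hmaps : Set.MapsTo (fun x => α + β * x) (nthRootsFinset n (1 : R) : Set R)
      (nthRootsFinset n (1 : R) : Set R)) :
    (β = 0 ∧ α ∈ nthRootsFinset n (1 : R)) ∨ (α = 0 ∧ β ∈ nthRootsFinset n (1 : R)) := by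
  have hn : 0 < n := Nat.pos_of_ne_zero fun hn => by simp [hn] at hS
  have hαβ : α + β ∈ nthRootsFinset n (1 : R) := by
    simpa using hmaps (one_mem_nthRootsFinset hn)
  rcases eq_or_ne β 0 with rfl | hβ
  · exact .inl ⟨rfl, by simpa using hαβ⟩
  · have key := card_nsmul_add_mul_sum_eq_sum_of_mapsTo hβ hmaps
    rw [sum_nthRootsFinset_one_eq_zero hS, mul_zero, add_zero, nsmul_eq_mul] at key
    have hα : α = 0 := (mul_eq_zero.1 key).resolve_left hSR
    exact .inr ⟨hα, by simpa [hα] using hαβ⟩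

theorem image_eq_nthRootsFinset_one_of_injective [DecidableEq R] {n : ℕ}
    {f : Fin n → R} (hf : Injective f) (hroots : ∀ i, f i ^ n = 1) :
    univ.image f = nthRootsFinset n (1 : R) := by
  refine eq_of_subset_of_card_le (fun g hg => ?_) ?_
  · obtain ⟨i, -, rfl⟩ := mem_image.1 hg
    exact (mem_nthRootsFinset i.pos 1).2 (hroots i)
  · rw [card_image_of_injective _ hf, card_univ, Fintype.card_fin, nthRootsFinset_def]
    exact (Multiset.toFinset_card_le _).trans (card_nthRoots n 1)

end RootsOfUnity

theorem FiniteField.natCast_ne_zero_of_dvd_card_sub_one {F : Type*} [Field F] [Fintype F] {t : ℕ}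
    (h : t ∣ Fintype.card F - 1) : (t : F) ≠ 0 := by
  obtain ⟨k, hk⟩ := h
  intro ht
  have hcard : ((Fintype.card F - 1 : ℕ) : F) = -1 := by
    rw [Nat.cast_sub Fintype.card_pos, FiniteField.cast_card_eq_zero, Nat.cast_one, zero_sub]
  rw [hk, Nat.cast_mul, ht, zero_mul, zero_eq_neg] at hcard
  exact one_ne_zero hcard

namespace Furedi

variable {F : Type*} [Field F]

def dot (p q : F × F) : F := p.1 * q.1 + p.2 * q.2

def det (p q : F × F) : F := p.1 * q.2 - p.2 * q.1

theorem add_dot (p p' q : F × F) : dot (p + p') q = dot p q + dot p' q := by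
  simp only [dot, Prod.fst_add, Prod.snd_add]; ring

theorem smul_dot (l : F) (p q : F × F) : dot (l • p) q = l * dot p q := by
  simp only [dot, Prod.smul_fst, Prod.smul_snd, smul_eq_mul]; ring

theorem dot_smul (l : F) (p q : F × F) : dot p (l • q) = l * dot p q := by
  simp only [dot, Prod.smul_fst, Prod.smul_snd, smul_eq_mul]; ring

theorem exists_eq_smul_of_det_eq_zero {p q : F × F} (hp : p ≠ 0) (h : det p q = 0) :
    ∃ l : F, q = l • p := by
  obtain ⟨a, b⟩ := p
  obtain ⟨c, d⟩ := q
  simp only [det] at h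
  by_cases ha : a = 0
  · have hb : b ≠ 0 := fun hb => hp (by simp [ha, hb])
    have hc : c = 0 := by simpa [ha, hb] using h
    exact ⟨d / b, by simp [ha, hc, hb]⟩
  · refine ⟨c / a, ?_⟩
    ext <;> simp only [Prod.smul_mk, smul_eq_mul] <;> field_simp
    linear_combination h

theorem eq_of_dot_eq_of_det_ne_zero {p p' r r' : F × F} (h : det p p' ≠ 0)
    (h₁ : dot p r = dot p r') (h₂ : dot p' r = dot p' r') : r = r' := by
  simp only [det, dot] at h h₁ h₂
  ext
  · exact mul_left_cancel₀ h (by linear_combination p'.2 * h₁ - p.2 * h₂)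
  · exact mul_left_cancel₀ h (by linear_combination p.1 * h₂ - p'.1 * h₁)

theorem exists_eq_add_smul_of_det_ne_zero {p p' : F × F} (h : det p p' ≠ 0) (c : F × F) :
    ∃ α β : F, c = α • p + β • p' := by
  refine ⟨(c.1 * p'.2 - c.2 * p'.1) / det p p', (p.1 * c.2 - p.2 * c.1) / det p p', ?_⟩
  ext <;> simp only [Prod.fst_add, Prod.snd_add, Prod.smul_fst, Prod.smul_snd, smul_eq_mul] <;>
    field_simp <;> simp only [det] <;> ring

variable {t : ℕ}

theorem furediRel_iff {p q : {p : F × F // p ≠ 0}} :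
    FurediRel t p q ↔ ∃ h : F, h ^ t = 1 ∧ (q : F × F) = h • (p : F × F) :=
  Iff.rfl

theorem furediRel_equivalence (ht : t ≠ 0) : Equivalence (FurediRel (F := F) t) where
  refl p := furediRel_iff.2 ⟨1, one_pow t, (one_smul F _).symm⟩
  symm := by
    intro p q hpq
    obtain ⟨h, hh, hq⟩ := furediRel_iff.1 hpq
    have h0 : h ≠ 0 := (IsUnit.of_pow_eq_one hh ht).ne_zero
    refine furediRel_iff.2 ⟨h⁻¹, by rw [inv_pow, hh, inv_one], ?_⟩
    rw [hq, smul_smul, inv_mul_cancel₀ h0, one_smul]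
  trans := by
    intro p q r hpq hqr
    obtain ⟨h, hh, hq⟩ := furediRel_iff.1 hpq
    obtain ⟨h', hh', hr⟩ := furediRel_iff.1 hqr
    exact furediRel_iff.2 ⟨h' * h, by rw [mul_pow, hh, hh', one_mul], by rw [hr, hq, smul_smul]⟩

theorem mk_eq_mk_iff (ht : t ≠ 0) {p q : {p : F × F // p ≠ 0}} :
    Quot.mk (FurediRel t) p = Quot.mk (FurediRel t) q ↔ FurediRel t p q :=
  Quot.eq.trans (furediRel_equivalence ht).eqvGen_iff

theorem mk_eq_mk_of_eq_smul {p q : {p : F × F // p ≠ 0}} {h : F} (hh : h ^ t = 1)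
    (hq : (q : F × F) = h • (p : F × F)) : Quot.mk (FurediRel t) p = Quot.mk (FurediRel t) q :=
  Quot.sound (furediRel_iff.2 ⟨h, hh, hq⟩)

theorem furediAdj_mk_iff (ht : t ≠ 0) {p q : {p : F × F // p ≠ 0}} :
    FurediAdj (Quot.mk (FurediRel t) p) (Quot.mk (FurediRel t) q) ↔
      dot (p : F × F) q ^ t = 1 := by
  refine ⟨?_, fun h => ⟨p, q, rfl, rfl, h⟩⟩
  rintro ⟨p₁, q₁, hp, hq, hdot⟩
  obtain ⟨a, ha, hp⟩ := furediRel_iff.1 ((mk_eq_mk_iff ht).1 hp)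
  obtain ⟨b, hb, hq⟩ := furediRel_iff.1 ((mk_eq_mk_iff ht).1 hq)
  rw [hp, hq, smul_dot, dot_smul, mul_pow, mul_pow, ha, hb, one_mul, one_mul]
  exact hdot

theorem exists_rep_dot_eq_one (ht : t ≠ 0) {p : {p : F × F // p ≠ 0}} {w : FurediVertex F t}
    (hw : FurediAdj (Quot.mk (FurediRel t) p) w) :
    ∃ r : {p : F × F // p ≠ 0}, Quot.mk (FurediRel t) r = w ∧ dot (p : F × F) r = 1 := by
  obtain ⟨q, rfl⟩ := Quot.exists_rep w
  have hq := (furediAdj_mk_iff ht).1 hw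
  have he : dot (p : F × F) q ≠ 0 := (IsUnit.of_pow_eq_one hq ht).ne_zero
  refine ⟨⟨(dot (p : F × F) q)⁻¹ • (q : F × F), smul_ne_zero (inv_ne_zero he) q.2⟩, ?_, ?_⟩
  · exact (mk_eq_mk_of_eq_smul (by rw [inv_pow, hq, inv_one]) rfl).symm
  · exact (dot_smul _ _ _).trans (inv_mul_cancel₀ he)

theorem det_ne_zero_of_mk_ne {p p' : {p : F × F // p ≠ 0}} {r : F × F}
    (hpp' : Quot.mk (FurediRel t) p ≠ Quot.mk (FurediRel t) p') (hpr : dot (p : F × F) r = 1)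
    (hp'r : dot (p' : F × F) r ^ t = 1) : det (p : F × F) p' ≠ 0 := by
  intro h
  obtain ⟨l, hl⟩ := exists_eq_smul_of_det_eq_zero p.2 h
  rw [hl, smul_dot, hpr, mul_one] at hp'r
  exact hpp' (mk_eq_mk_of_eq_smul hp'r hl)

theorem injective_dot_of_det_ne_zero {ι : Type*} {p p' : F × F} (h : det p p' ≠ 0)
    {r : ι → F × F} (hr : Injective r) (hpr : ∀ i, dot p (r i) = 1) :
    Injective fun i => dot p' (r i) := fun i j hij =>
  hr (eq_of_dot_eq_of_det_ne_zero h ((hpr i).trans (hpr j).symm) hij)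

end Furedi

open Furedi in
/-- Füredi's graph `G_t(q)` (with `t ≥ 2`, `t ∣ q - 1`) contains no copy of
`K_{3,t}`: there are no three distinct vertices `u, v, z` and `t` distinct vertices
`w_1, …, w_t` with every one of `u, v, z` adjacent to every `w_i`. -/
theorem stmt_19 {F : Type*} [Field F] [Fintype F] (t : ℕ) (ht : 2 ≤ t)
    (hdvd : t ∣ Fintype.card F - 1) :
    ¬ ∃ (u v z : FurediVertex F t) (w : Fin t → FurediVertex F t),
      u ≠ v ∧ u ≠ z ∧ v ≠ z ∧ Function.Injective w ∧
      ∀ i, FurediAdj u (w i) ∧ FurediAdj v (w i) ∧ FurediAdj z (w i) := by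
  classical
  rintro ⟨u, v, z, w, huv, huz, hvz, hw, hadj⟩
  have ht0 : t ≠ 0 := by omega
  obtain ⟨p, rfl⟩ := Quot.exists_rep u
  obtain ⟨p', rfl⟩ := Quot.exists_rep v
  obtain ⟨c, rfl⟩ := Quot.exists_rep z
  choose r hrw hpr using fun i => exists_rep_dot_eq_one ht0 (hadj i).1
  have hp'r i : dot (p' : F × F) (r i) ^ t = 1 :=
    (furediAdj_mk_iff ht0).1 (hrw i ▸ (hadj i).2.1)
  have hcr i : dot (c : F × F) (r i) ^ t = 1 := (furediAdj_mk_iff ht0).1 (hrw i ▸ (hadj i).2.2)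
  have hr : Injective fun i => (r i : F × F) := fun i j hij =>
    hw (by rw [← hrw i, ← hrw j, Subtype.ext hij])
  have hdet := det_ne_zero_of_mk_ne huv (hpr ⟨0, by omega⟩) (hp'r _)
  have hinj := injective_dot_of_det_ne_zero (p' := p') hdet hr hpr
  have himage := image_eq_nthRootsFinset_one_of_injective hinj hp'r
  have hcard : #(nthRootsFinset t (1 : F)) = t := by
    rw [← himage, card_image_of_injective _ hinj, card_univ, Fintype.card_fin]
  have htF : (#(nthRootsFinset t (1 : F)) : F) ≠ 0 := by
    rw [hcard]; exact FiniteField.natCast_ne_zero_of_dvd_card_sub_one hdvd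
  obtain ⟨α, β, hc⟩ := exists_eq_add_smul_of_det_ne_zero hdet c
  have hmaps : Set.MapsTo (fun x => α + β * x) (nthRootsFinset t (1 : F) : Set F)
      (nthRootsFinset t (1 : F) : Set F) := by
    intro g hg
    obtain ⟨i, -, rfl⟩ := mem_image.1 (himage ▸ hg)
    rw [mem_coe, mem_nthRootsFinset (by omega), ← hcr i, hc, add_dot, smul_dot, smul_dot, hpr]
    simp
  rcases add_mul_mapsTo_nthRootsFinset_one (by omega) htF hmaps with ⟨rfl, hα⟩ | ⟨rfl, hβ⟩
  · exact huz (mk_eq_mk_of_eq_smul ((mem_nthRootsFinset (by omega) 1).1 hα) (by simpa using hc))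
  · exact hvz (mk_eq_mk_of_eq_smul ((mem_nthRootsFinset (by omega) 1).1 hβ) (by simpa using hc))
end
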